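/- arXiv:1909.01797 — 5 statements merged into one kernel-verified Lean document; each statement's English description precedes it below -/
import Mathlib

section
/- Let $r_1, r_2, n, k$ be positive integers with $k \le \min\{r_1, r_2\}$, and let $Z_i \in \mathbb{R}^{r_i \times n}$ satisfy $Z_i Z_i^\top = n I_{r_i}$ for both $i \in \{1,2\}$. Let $W_1 \Sigma W_2^\top$ be any $k$-truncated singular value decomposition of $Z_1 Z_2^\top$ (so $W_i \in \mathbb{R}^{r_i \times k}$ has orthonormal columns whose columns are leading left/right singular vectors and $\Sigma$ is the diagonal matrix of the $k$ largest singular values). Then $(B_1, B_2) = (W_1^\top, W_2^\top)$ minimizes $\|B_1 Z_1 - B_2 Z_2\|_F^2$ over all pairs $(B_1, B_2)$ with $B_i \in \mathbb{R}^{k \times r_i}$ and $B_i B_i^\top = I_k$ for both $i \in \{1,2\}$. -/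
open Matrix

/-- The squared Frobenius norm of a real matrix. -/
noncomputable def frobSq {m n : ℕ} (M : Matrix (Fin m) (Fin n) ℝ) : ℝ :=
  ∑ i, ∑ j, (M i j) ^ 2

/-- The `l`-th largest singular value of a real `m × n` matrix (`l = 0` gives the largest),
defined as the square root of the `l`-th largest eigenvalue of `MᴴM`. -/
noncomputable def svDesc {m n : ℕ} (M : Matrix (Fin m) (Fin n) ℝ) (l : Fin n) : ℝ :=
  Real.sqrt ((Matrix.isHermitian_conjTranspose_mul_self M).eigenvalues
    (Tuple.sort (Matrix.isHermitian_conjTranspose_mul_self M).eigenvalues l.rev))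

/-!
For `BᵢBᵢᵀ = I_k`, the constraints `ZᵢZᵢᵀ = n I` give
`‖B₁Z₁ - B₂Z₂‖_F² = 2nk - 2 tr(B₁ M B₂ᵀ)` with `M = Z₁Z₂ᵀ`, so the problem is to maximise
`tr(B₁ M B₂ᵀ)`. For `(W₁ᵀ, W₂ᵀ)` this trace is `tr Σ`, the sum of the `k` largest singular values,
and Ky Fan's inequality says no feasible pair does better. To prove it, write `M = W diag(s) Uᵀ`
with `U` orthogonal and `W` a partial isometry, so that `tr(B₁ M B₂ᵀ) = ∑ⱼ sⱼ ⟪xⱼ, yⱼ⟫` for the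
columns `xⱼ` of `B₁W` and `yⱼ` of `B₂U`. By AM-GM this is at most `∑ⱼ sⱼ tⱼ` with
`tⱼ = (‖xⱼ‖² + ‖yⱼ‖²)/2`; contractivity gives `0 ≤ tⱼ ≤ 1` and `∑ⱼ tⱼ ≤ k`, and such weights
can do no better than putting weight `1` on the `k` largest `sⱼ`.
-/

theorem Fin.sum_ite_val_lt {M : Type*} [AddCommMonoid M] {k R : ℕ} (hk : k ≤ R)
    (f : Fin R → M) :
    ∑ j : Fin R, (if (j : ℕ) < k then f j else 0) = ∑ l : Fin k, f (Fin.castLE hk l) :=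
  (Fintype.sum_of_injective (Fin.castLE hk) (Fin.castLE_injective hk)
    (fun l => f (Fin.castLE hk l)) (fun j => if (j : ℕ) < k then f j else 0)
    (fun j hj => if_neg fun hjk => hj ⟨⟨j, hjk⟩, rfl⟩) (fun l => (if_pos l.isLt).symm)).symm

theorem sum_mul_le_sum_castLE {k R : ℕ} (hk : k ≤ R) {d t : Fin R → ℝ} (hd : Antitone d)
    (hd0 : 0 ≤ d) (ht0 : 0 ≤ t) (ht1 : t ≤ 1) (htk : ∑ j, t j ≤ k) :
    ∑ j, d j * t j ≤ ∑ l : Fin k, d (Fin.castLE hk l) := by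
  set c : ℝ := if h : k < R then d ⟨k, h⟩ else 0
  have hc0 : 0 ≤ c := dite_nonneg (fun _ => hd0 _) fun _ => le_rfl
  -- with the threshold `c = d k`, every term has `(d j - c) * (t j - [j < k]) ≤ 0`
  have hterm : ∀ j, d j * t j - (if (j : ℕ) < k then d j else 0)
      ≤ c * (t j - if (j : ℕ) < k then 1 else 0) := by
    intro j
    split_ifs with hjk
    · have hcd : c ≤ d j := by
        unfold c
        split_ifs with hkR
        · exact hd (Fin.mk_le_mk.mpr hjk.le)
        · exact hd0 j
      have ht1j : t j ≤ 1 := ht1 j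
      nlinarith [mul_nonneg (sub_nonneg.2 hcd) (sub_nonneg.2 ht1j)]
    · have hkR : k < R := (not_lt.mp hjk).trans_lt j.isLt
      have hdc : d j ≤ c := by
        simp only [c, dif_pos hkR]
        exact hd (Fin.mk_le_mk.mpr (not_lt.mp hjk))
      nlinarith [mul_nonneg (sub_nonneg.2 hdc) (ht0 j : 0 ≤ t j)]
  have hk' : ∑ j : Fin R, (if (j : ℕ) < k then (1 : ℝ) else 0) = k := by
    simp [Fin.sum_ite_val_lt hk]
  rw [← Fin.sum_ite_val_lt hk]
  have := Finset.sum_le_sum fun j (_ : j ∈ Finset.univ) => hterm j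
  rw [Finset.sum_sub_distrib, ← Finset.mul_sum, Finset.sum_sub_distrib, hk'] at this
  linarith [mul_le_mul_of_nonneg_left htk hc0]

namespace Matrix

variable {l m n : Type*} [Fintype l] [Fintype m] [Fintype n]

def IsContraction (A : Matrix m n ℝ) : Prop :=
  ∀ v : n → ℝ, A *ᵥ v ⬝ᵥ A *ᵥ v ≤ v ⬝ᵥ v

theorem isContraction_of_mul_transpose_mul_self {A : Matrix m n ℝ} (hA : A * Aᵀ * A = A) :
    IsContraction A := by
  intro v
  set y := A *ᵥ v
  have hcross : v ⬝ᵥ Aᵀ *ᵥ y = y ⬝ᵥ y := by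
    rw [dotProduct_mulVec, vecMul_transpose]
  have hback : Aᵀ *ᵥ y ⬝ᵥ Aᵀ *ᵥ y = y ⬝ᵥ y := by
    rw [dotProduct_mulVec, vecMul_transpose, mulVec_mulVec, mulVec_mulVec, hA, dotProduct_comm]
  have := dotProduct_star_self_nonneg (v - Aᵀ *ᵥ y)
  rw [star_trivial] at this
  simp only [sub_dotProduct, dotProduct_sub, hback, dotProduct_comm (Aᵀ *ᵥ y) v, hcross] at this
  linarith

theorem isContraction_of_mul_transpose_eq_one [DecidableEq m] {A : Matrix m n ℝ}
    (hA : A * Aᵀ = 1) : IsContraction A :=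
  isContraction_of_mul_transpose_mul_self (by rw [hA, Matrix.one_mul])

theorem IsContraction.mul {A : Matrix l m ℝ} {B : Matrix m n ℝ} (hA : IsContraction A)
    (hB : IsContraction B) : IsContraction (A * B) := fun v => by
  rw [← mulVec_mulVec]
  exact (hA _).trans (hB v)

theorem transpose_mul_self_apply_self [DecidableEq n] (A : Matrix m n ℝ) (j : n) :
    (Aᵀ * A) j j = A *ᵥ Pi.single j 1 ⬝ᵥ A *ᵥ Pi.single j 1 := by
  rw [mulVec_single_one, mul_apply']
  rfl

theorem transpose_mul_self_apply_self_nonneg [DecidableEq n] (A : Matrix m n ℝ) (j : n) :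
    0 ≤ (Aᵀ * A) j j := by
  simpa [transpose_mul_self_apply_self] using dotProduct_star_self_nonneg (A *ᵥ Pi.single j 1)

theorem IsContraction.transpose_mul_self_mul_apply_le [DecidableEq n] {C : Matrix l m ℝ}
    (hC : IsContraction C) (A : Matrix m n ℝ) (j : n) :
    ((C * A)ᵀ * (C * A)) j j ≤ (Aᵀ * A) j j := by
  rw [transpose_mul_self_apply_self, transpose_mul_self_apply_self, ← mulVec_mulVec]
  exact hC _

theorem IsContraction.transpose_mul_self_apply_le_one [DecidableEq n] {A : Matrix m n ℝ}
    (hA : IsContraction A) (j : n) : (Aᵀ * A) j j ≤ 1 := by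
  simpa using hA.transpose_mul_self_mul_apply_le 1 j

theorem IsContraction.trace_transpose_mul_self_mul_le [DecidableEq n] {C : Matrix l m ℝ}
    (hC : IsContraction C) (A : Matrix m n ℝ) :
    trace ((C * A)ᵀ * (C * A)) ≤ trace (Aᵀ * A) :=
  Finset.sum_le_sum fun j _ => hC.transpose_mul_self_mul_apply_le A j

theorem trace_mul_diagonal_mul_transpose_le [DecidableEq n] (X Y : Matrix m n ℝ) {s : n → ℝ}
    (hs : 0 ≤ s) :
    trace (X * diagonal s * Yᵀ) ≤ ∑ j, s j * (((Xᵀ * X) j j + (Yᵀ * Y) j j) / 2) := by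
  simp only [trace, diag, mul_apply, diagonal_apply, mul_ite, mul_zero, Finset.sum_ite_eq',
    Finset.mem_univ, if_true, transpose_apply, Finset.mul_sum, ← Finset.sum_add_distrib,
    Finset.sum_div]
  rw [Finset.sum_comm]
  refine Finset.sum_le_sum fun j _ => Finset.sum_le_sum fun i _ => ?_
  nlinarith [hs j, mul_nonneg (hs j) (sq_nonneg (X i j - Y i j))]

theorem exists_svd_of_transpose_mul_self_eq_diagonal [DecidableEq n]
    {M : Matrix m n ℝ} {U : Matrix n n ℝ} {μ : n → ℝ}
    (hU : U * Uᵀ = 1) (hMU : (M * U)ᵀ * (M * U) = diagonal μ) :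
    ∃ W : Matrix m n ℝ, W * Wᵀ * W = W ∧ M = W * diagonal (fun j => √(μ j)) * Uᵀ := by
  set s : n → ℝ := fun j => √(μ j)
  have hs : ∀ j, s j ^ 2 = μ j := fun j => Real.sq_sqrt <| by
    simpa only [hMU, diagonal_apply_eq] using transpose_mul_self_apply_self_nonneg (M * U) j
  -- `s⁻¹` is `0` where `s` is, so `W = M U diag(s)⁺`; `hker` says the columns of `M U` with
  -- `s j = 0` vanish, which is what makes `M = W diag(s) Uᵀ` hold there too.
  set W := M * U * diagonal s⁻¹
  have hWW : Wᵀ * W = diagonal (s⁻¹ * μ * s⁻¹) := by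
    have : Wᵀ * W = diagonal s⁻¹ * ((M * U)ᵀ * (M * U)) * diagonal s⁻¹ := by
      simp only [W, transpose_mul, diagonal_transpose, Matrix.mul_assoc]
    rw [this, hMU, diagonal_mul_diagonal, diagonal_mul_diagonal]
    rfl
  have hker : M * U * diagonal (1 - s⁻¹ * s) = 0 := by
    rw [← conjTranspose_mul_self_mul_eq_zero, conjTranspose_eq_transpose_of_trivial, hMU,
      diagonal_mul_diagonal, diagonal_eq_zero]
    funext j
    rcases eq_or_ne (s j) 0 with h | h
    · simp [← hs j, h]
    · simp [h]
  refine ⟨W, ?_, ?_⟩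
  · rw [Matrix.mul_assoc, hWW, Matrix.mul_assoc, diagonal_mul_diagonal]
    congr 2
    funext j
    simp only [Pi.mul_apply, Pi.inv_apply, ← hs j]
    rcases eq_or_ne (s j) 0 with h | h
    · simp [h]
    · field_simp
  · calc M = M * U * Uᵀ := by rw [Matrix.mul_assoc, hU, Matrix.mul_one]
      _ = (M * U * diagonal (s⁻¹ * s) + M * U * diagonal (1 - s⁻¹ * s)) * Uᵀ := by
        rw [← Matrix.mul_add, diagonal_add]
        simp only [Pi.sub_apply, Pi.one_apply, add_sub_cancel, diagonal_one, Matrix.mul_one]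
      _ = W * diagonal s * Uᵀ := by
        simp only [hker, add_zero, W, Matrix.mul_assoc, diagonal_mul_diagonal]
        rfl

theorem IsHermitian.eigenvectorUnitary_mul_transpose [DecidableEq n]
    {A : Matrix n n ℝ} (hA : A.IsHermitian) :
    (hA.eigenvectorUnitary : Matrix n n ℝ) * (hA.eigenvectorUnitary : Matrix n n ℝ)ᵀ = 1 := by
  rw [← conjTranspose_eq_transpose_of_trivial, ← star_eq_conjTranspose]
  exact mem_unitaryGroup_iff.mp hA.eigenvectorUnitary.2

theorem IsHermitian.transpose_eigenvectorUnitary_mul_mul_eigenvectorUnitary [DecidableEq n]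
    {A : Matrix n n ℝ} (hA : A.IsHermitian) :
    (hA.eigenvectorUnitary : Matrix n n ℝ)ᵀ * A * hA.eigenvectorUnitary =
      diagonal hA.eigenvalues := by
  have := hA.conjStarAlgAut_star_eigenvectorUnitary
  rw [Unitary.conjStarAlgAut_star_apply, star_eq_conjTranspose,
    conjTranspose_eq_transpose_of_trivial] at this
  simpa using this

theorem mul_eigenvectorUnitary_transpose_mul_self [DecidableEq n] {M : Matrix m n ℝ}
    (hH : (Mᴴ * M).IsHermitian) :
    (M * (hH.eigenvectorUnitary : Matrix n n ℝ))ᵀ * (M * (hH.eigenvectorUnitary : Matrix n n ℝ))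
      = diagonal hH.eigenvalues := by
  set U : Matrix n n ℝ := ↑hH.eigenvectorUnitary
  calc (M * U)ᵀ * (M * U) = Uᵀ * (Mᴴ * M) * U := by
        rw [conjTranspose_eq_transpose_of_trivial, transpose_mul]
        simp only [Matrix.mul_assoc]
    _ = diagonal hH.eigenvalues := hH.transpose_eigenvectorUnitary_mul_mul_eigenvectorUnitary

theorem trace_mul_diagonal_mul_transpose_le_sum_castLE {k R : ℕ} (hk : k ≤ R)
    {X Y : Matrix m (Fin R) ℝ} (hX : IsContraction X) (hY : IsContraction Y)
    (hXk : trace (Xᵀ * X) ≤ k) (hYk : trace (Yᵀ * Y) ≤ k) {s d : Fin R → ℝ}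
    (π : Equiv.Perm (Fin R)) (hsd : ∀ l, s (π l) = d l) (hd : Antitone d) (hd0 : 0 ≤ d) :
    trace (X * diagonal s * Yᵀ) ≤ ∑ l : Fin k, d (Fin.castLE hk l) := by
  set t : Fin R → ℝ := fun j => ((Xᵀ * X) j j + (Yᵀ * Y) j j) / 2
  have hs0 : 0 ≤ s := fun j => by
    have : 0 ≤ d (π.symm j) := hd0 _
    rwa [← hsd, Equiv.apply_symm_apply] at this
  have ht0 : 0 ≤ t ∘ π := fun j => by
    show 0 ≤ ((Xᵀ * X) (π j) (π j) + (Yᵀ * Y) (π j) (π j)) / 2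
    linarith [transpose_mul_self_apply_self_nonneg X (π j),
      transpose_mul_self_apply_self_nonneg Y (π j)]
  have ht1 : t ∘ π ≤ 1 := fun j => by
    show ((Xᵀ * X) (π j) (π j) + (Yᵀ * Y) (π j) (π j)) / 2 ≤ 1
    linarith [hX.transpose_mul_self_apply_le_one (π j), hY.transpose_mul_self_apply_le_one (π j)]
  have htk : ∑ j, (t ∘ π) j ≤ k := by
    rw [Function.comp_def, Equiv.sum_comp π t]
    simp only [t, ← Finset.sum_div, Finset.sum_add_distrib]
    change (trace (Xᵀ * X) + trace (Yᵀ * Y)) / 2 ≤ k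
    linarith
  calc trace (X * diagonal s * Yᵀ) ≤ ∑ j, s j * t j := trace_mul_diagonal_mul_transpose_le X Y hs0
    _ = ∑ l, d l * (t ∘ π) l := by
        rw [← Equiv.sum_comp π]
        simp only [hsd, Function.comp_apply]
    _ ≤ ∑ l : Fin k, d (Fin.castLE hk l) := sum_mul_le_sum_castLE hk hd hd0 ht0 ht1 htk

end Matrix

theorem frobSq_eq_trace {m n : ℕ} (A : Matrix (Fin m) (Fin n) ℝ) :
    frobSq A = trace (A * Aᵀ) := by
  simp [frobSq, trace, mul_apply, sq]

theorem frobSq_mul_sub_mul {r₁ r₂ n k : ℕ} {c : ℝ} {Z₁ : Matrix (Fin r₁) (Fin n) ℝ}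
    {Z₂ : Matrix (Fin r₂) (Fin n) ℝ} (hZ₁ : Z₁ * Z₁ᵀ = c • 1) (hZ₂ : Z₂ * Z₂ᵀ = c • 1)
    {B₁ : Matrix (Fin k) (Fin r₁) ℝ} {B₂ : Matrix (Fin k) (Fin r₂) ℝ}
    (hB₁ : B₁ * B₁ᵀ = 1) (hB₂ : B₂ * B₂ᵀ = 1) :
    frobSq (B₁ * Z₁ - B₂ * Z₂) = 2 * c * k - 2 * trace (B₁ * (Z₁ * Z₂ᵀ) * B₂ᵀ) := by
  have hsq : ∀ (r : ℕ) (B : Matrix (Fin k) (Fin r) ℝ) (Z : Matrix (Fin r) (Fin n) ℝ),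
      Z * Zᵀ = c • 1 → B * Bᵀ = 1 → trace (B * Z * (B * Z)ᵀ) = c * k := fun r B Z hZ hB => by
    rw [transpose_mul, Matrix.mul_assoc, ← Matrix.mul_assoc Z, hZ, Matrix.smul_mul,
      Matrix.one_mul, Matrix.mul_smul, hB, trace_smul, trace_one, Fintype.card_fin, smul_eq_mul]
  have hcross : trace (B₁ * Z₁ * (B₂ * Z₂)ᵀ) = trace (B₁ * (Z₁ * Z₂ᵀ) * B₂ᵀ) := by
    simp only [transpose_mul, Matrix.mul_assoc]
  have hswap : trace (B₂ * Z₂ * (B₁ * Z₁)ᵀ) = trace (B₁ * Z₁ * (B₂ * Z₂)ᵀ) := by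
    rw [← trace_transpose, transpose_mul, transpose_transpose]
  rw [frobSq_eq_trace, transpose_sub, Matrix.sub_mul, Matrix.mul_sub, Matrix.mul_sub, trace_sub,
    trace_sub, trace_sub, hsq _ _ _ hZ₁ hB₁, hsq _ _ _ hZ₂ hB₂, hswap, hcross]
  ring

theorem svDesc_antitone {m n : ℕ} (M : Matrix (Fin m) (Fin n) ℝ) : Antitone (svDesc M) :=
  fun _ _ h => Real.sqrt_le_sqrt <|
    Tuple.monotone_sort (isHermitian_conjTranspose_mul_self M).eigenvalues (Fin.rev_le_rev.mpr h)

theorem trace_mul_mul_transpose_le_sum_svDesc {r₁ r₂ k : ℕ} (hk : k ≤ r₂)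
    (M : Matrix (Fin r₁) (Fin r₂) ℝ) {B₁ : Matrix (Fin k) (Fin r₁) ℝ}
    {B₂ : Matrix (Fin k) (Fin r₂) ℝ} (hB₁ : B₁ * B₁ᵀ = 1) (hB₂ : B₂ * B₂ᵀ = 1) :
    trace (B₁ * M * B₂ᵀ) ≤ ∑ l : Fin k, svDesc M (Fin.castLE hk l) := by
  set hH := isHermitian_conjTranspose_mul_self M
  set U : Matrix (Fin r₂) (Fin r₂) ℝ := ↑hH.eigenvectorUnitary
  obtain ⟨W, hW, hM⟩ := exists_svd_of_transpose_mul_self_eq_diagonal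
    hH.eigenvectorUnitary_mul_transpose (mul_eigenvectorUnitary_transpose_mul_self hH)
  have hYY : (B₂ * U) * (B₂ * U)ᵀ = 1 := by
    rw [transpose_mul, Matrix.mul_assoc, ← Matrix.mul_assoc U,
      hH.eigenvectorUnitary_mul_transpose, Matrix.one_mul, hB₂]
  have hWt : IsContraction Wᵀ := isContraction_of_mul_transpose_mul_self <| by
    simpa only [transpose_mul, transpose_transpose, Matrix.mul_assoc] using congrArg transpose hW
  have hXk : trace ((B₁ * W)ᵀ * (B₁ * W)) ≤ k := by
    have := hWt.trace_transpose_mul_self_mul_le B₁ᵀ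
    rwa [transpose_transpose, hB₁, trace_one, Fintype.card_fin, ← transpose_mul,
      transpose_transpose, trace_mul_comm] at this
  have hM' :
      B₁ * M * B₂ᵀ = B₁ * W * diagonal (fun j => √(hH.eigenvalues j)) * (B₂ * U)ᵀ := by
    conv_lhs => rw [hM]
    simp only [transpose_mul, Matrix.mul_assoc]
    rfl
  rw [hM']
  refine trace_mul_diagonal_mul_transpose_le_sum_castLE hk
    ((isContraction_of_mul_transpose_eq_one hB₁).mul (isContraction_of_mul_transpose_mul_self hW))
    (isContraction_of_mul_transpose_eq_one hYY) hXk
    (by rw [trace_mul_comm, hYY, trace_one, Fintype.card_fin])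
    (Fin.revPerm.trans (Tuple.sort hH.eigenvalues)) (fun _ => rfl) (svDesc_antitone M)
    (fun _ => Real.sqrt_nonneg _)

theorem projection_procrustes_solution_general (r₁ r₂ n k : ℕ)
    (hk : k ≤ min r₁ r₂)
    (Z₁ : Matrix (Fin r₁) (Fin n) ℝ) (Z₂ : Matrix (Fin r₂) (Fin n) ℝ)
    (hZ₁ : Z₁ * Z₁ᵀ = (n : ℝ) • 1) (hZ₂ : Z₂ * Z₂ᵀ = (n : ℝ) • 1)
    (W₁ : Matrix (Fin r₁) (Fin k) ℝ) (W₂ : Matrix (Fin r₂) (Fin k) ℝ)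
    (S : Matrix (Fin k) (Fin k) ℝ)
    (hW₁ : W₁ᵀ * W₁ = 1) (hW₂ : W₂ᵀ * W₂ = 1)
    (hS : S = Matrix.diagonal (fun l : Fin k =>
      svDesc (Z₁ * Z₂ᵀ) (Fin.castLE (le_trans hk (min_le_right r₁ r₂)) l)))
    (hMW₂ : (Z₁ * Z₂ᵀ) * W₂ = W₁ * S) :
    (W₁ᵀ * (W₁ᵀ)ᵀ = 1 ∧ W₂ᵀ * (W₂ᵀ)ᵀ = 1) ∧
      ∀ (B₁ : Matrix (Fin k) (Fin r₁) ℝ) (B₂ : Matrix (Fin k) (Fin r₂) ℝ),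
        B₁ * B₁ᵀ = 1 → B₂ * B₂ᵀ = 1 →
        frobSq (W₁ᵀ * Z₁ - W₂ᵀ * Z₂) ≤ frobSq (B₁ * Z₁ - B₂ * Z₂) := by
  have hk₂ : k ≤ r₂ := hk.trans (min_le_right r₁ r₂)
  have hW₁' : W₁ᵀ * W₁ᵀᵀ = 1 := by rwa [transpose_transpose]
  have hW₂' : W₂ᵀ * W₂ᵀᵀ = 1 := by rwa [transpose_transpose]
  refine ⟨⟨hW₁', hW₂'⟩, fun B₁ B₂ hB₁ hB₂ => ?_⟩
  have hW_trace :
      trace (W₁ᵀ * (Z₁ * Z₂ᵀ) * W₂ᵀᵀ) = ∑ l : Fin k, svDesc (Z₁ * Z₂ᵀ) (Fin.castLE hk₂ l) := by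
    rw [transpose_transpose, Matrix.mul_assoc, hMW₂, ← Matrix.mul_assoc, hW₁, Matrix.one_mul, hS,
      trace_diagonal]
  rw [frobSq_mul_sub_mul hZ₁ hZ₂ hW₁' hW₂', frobSq_mul_sub_mul hZ₁ hZ₂ hB₁ hB₂, hW_trace]
  linarith [trace_mul_mul_transpose_le_sum_svDesc hk₂ (Z₁ * Z₂ᵀ) hB₁ hB₂]

/-- Suppose `ZᵢZᵢᵀ = n Iᵣᵢ` and `k ≤ min{r₁, r₂}`. Let `W₁ Σ W₂ᵀ` be any
`k`-truncated singular value decomposition of `Z₁Z₂ᵀ`: `W₁ ∈ ℝ^{r₁×k}` and `W₂ ∈ ℝ^{r₂×k}`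
have orthonormal columns which are leading singular-vector pairs of `M := Z₁Z₂ᵀ`, i.e.
`M W₂ = W₁ Σ` and `Mᵀ W₁ = W₂ Σ` where `Σ` is the diagonal matrix of the `k` largest singular
values of `M` in decreasing order. Then `(B₁, B₂) = (W₁ᵀ, W₂ᵀ)` is feasible and minimizes
`‖B₁Z₁ - B₂Z₂‖_F²` over all pairs with `BᵢBᵢᵀ = I_k`. -/
theorem projection_procrustes_solution (r₁ r₂ n k : ℕ)
    (hr₁ : 0 < r₁) (hr₂ : 0 < r₂) (hn : 0 < n) (hk0 : 0 < k) (hk : k ≤ min r₁ r₂)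
    (Z₁ : Matrix (Fin r₁) (Fin n) ℝ) (Z₂ : Matrix (Fin r₂) (Fin n) ℝ)
    (hZ₁ : Z₁ * Z₁ᵀ = (n : ℝ) • 1) (hZ₂ : Z₂ * Z₂ᵀ = (n : ℝ) • 1)
    (W₁ : Matrix (Fin r₁) (Fin k) ℝ) (W₂ : Matrix (Fin r₂) (Fin k) ℝ)
    (S : Matrix (Fin k) (Fin k) ℝ)
    (hW₁ : W₁ᵀ * W₁ = 1) (hW₂ : W₂ᵀ * W₂ = 1)
    (hS : S = Matrix.diagonal (fun l : Fin k =>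
      svDesc (Z₁ * Z₂ᵀ) (Fin.castLE (le_trans hk (min_le_right r₁ r₂)) l)))
    (hMW₂ : (Z₁ * Z₂ᵀ) * W₂ = W₁ * S)
    (hMW₁ : (Z₁ * Z₂ᵀ)ᵀ * W₁ = W₂ * S) :
    (W₁ᵀ * (W₁ᵀ)ᵀ = 1 ∧ W₂ᵀ * (W₂ᵀ)ᵀ = 1) ∧
      ∀ (B₁ : Matrix (Fin k) (Fin r₁) ℝ) (B₂ : Matrix (Fin k) (Fin r₂) ℝ),
        B₁ * B₁ᵀ = 1 → B₂ * B₂ᵀ = 1 →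
        frobSq (W₁ᵀ * Z₁ - W₂ᵀ * Z₂) ≤ frobSq (B₁ * Z₁ - B₂ * Z₂) :=
  projection_procrustes_solution_general r₁ r₂ n k hk Z₁ Z₂ hZ₁ hZ₂ W₁ W₂ S hW₁ hW₂ hS hMW₂
end

section
/- Let $X = [X_1; X_2]$ and $Y = [Y_1; Y_2]$ be random vectors in $\mathbb{R}^{d_1} \times \mathbb{R}^{d_2}$ with finite second moments such that the covariance matrices $\Sigma_{X_i}$ and $\Sigma_{Y_i}$ are positive definite for both $i \in \{1,2\}$. Then for any $k \in \mathbb{N}$ with $S_X$ and $S_Y$ nonempty, the Hausdorff distance (with respect to $\|\cdot\|_V$) satisfies $\operatorname{dist}(S_X, S_Y)^2 \le \max_{i \in \{1,2\}} \frac{\|\Sigma_{X_i} - \Sigma_{Y_i}\|_{2\to2}}{\lambda_{\min}(\Sigma_{X_i}) \cdot \lambda_{\min}(\Sigma_{Y_i})}$. -/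
/-!
Each block is treated separately. If `A Σ Aᵀ = 1` and `Σ'` is positive definite, then
`B = A Σ^{1/2} Σ'^{-1/2}` satisfies `B Σ' Bᵀ = 1`, and
`A - B = (A Σ^{1/2}) Σ^{-1/2} (Σ'^{1/2} - Σ^{1/2}) Σ'^{-1/2}`, where `‖A Σ^{1/2}‖ ≤ 1`,
`‖Σ^{-1/2}‖² = ‖Σ⁻¹‖ ≤ λ_min(Σ)⁻¹`, and `‖Σ^{1/2} - Σ'^{1/2}‖² ≤ ‖Σ - Σ'‖`.
The last inequality holds for any positive semidefinite `S, T` in place of the square roots: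
if `v` is a unit eigenvector of `S - T` whose eigenvalue `μ` has maximal modulus, then
`⟪v, (S² - T²) v⟫ = μ (⟪v, S v⟫ + ⟪v, T v⟫)` while `μ = ⟪v, S v⟫ - ⟪v, T v⟫`, so
`μ² ≤ |⟪v, (S² - T²) v⟫| ≤ ‖S² - T²‖`.
-/

open Matrix MeasureTheory
open scoped Matrix.Norms.L2Operator MatrixOrder RealInnerProductSpace

namespace Matrix

variable {m n : Type*} [Fintype n] [DecidableEq n]

lemma IsHermitian.toEuclideanCLM_eigenvectorBasis {A : Matrix n n ℝ} (hA : A.IsHermitian)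
    (j : n) : toEuclideanCLM (𝕜 := ℝ) A (hA.eigenvectorBasis j) =
      hA.eigenvalues j • hA.eigenvectorBasis j :=
  WithLp.ofLp_injective 2 <| by
    simpa only [ofLp_toEuclideanCLM, WithLp.ofLp_smul] using hA.mulVec_eigenvectorBasis j

lemma IsHermitian.exists_norm_eq_abs_eigenvalues [Nonempty n] {A : Matrix n n ℝ}
    (hA : A.IsHermitian) : ∃ j, ‖A‖ = |hA.eigenvalues j| := by
  obtain ⟨x, hx, hxA⟩ :=
    (IsometricContinuousFunctionalCalculus.isGreatest_norm_spectrum (𝕜 := ℝ) A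
      hA.isSelfAdjoint).1
  rw [hA.spectrum_real_eq_range_eigenvalues] at hx
  obtain ⟨j, rfl⟩ := hx
  exact ⟨j, hxA.symm⟩

lemma abs_inner_toEuclideanCLM_self_le (A : Matrix n n ℝ) (x : EuclideanSpace ℝ n) :
    |⟪x, toEuclideanCLM (𝕜 := ℝ) A x⟫| ≤ ‖A‖ * ‖x‖ ^ 2 :=
  calc |⟪x, toEuclideanCLM (𝕜 := ℝ) A x⟫| ≤ ‖x‖ * ‖toEuclideanCLM (𝕜 := ℝ) A x‖ :=
        abs_real_inner_le_norm _ _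
    _ ≤ ‖x‖ * (‖A‖ * ‖x‖) := by gcongr; exact (toEuclideanCLM (𝕜 := ℝ) A).le_opNorm x
    _ = ‖A‖ * ‖x‖ ^ 2 := by ring

lemma PosSemidef.inner_toEuclideanCLM_self_nonneg {A : Matrix n n ℝ} (hA : A.PosSemidef)
    (x : EuclideanSpace ℝ n) : 0 ≤ ⟪x, toEuclideanCLM (𝕜 := ℝ) A x⟫ :=
  (isPositive_toEuclideanLin_iff.2 hA).inner_nonneg_right x

lemma norm_sub_sq_le_norm_mul_self_sub_mul_self {S T : Matrix n n ℝ} (hS : S.PosSemidef)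
    (hT : T.PosSemidef) : ‖S - T‖ ^ 2 ≤ ‖S * S - T * T‖ := by
  cases isEmpty_or_nonempty n
  · simp [Subsingleton.elim (S - T) 0]
  have hD : (S - T).IsHermitian := hS.1.sub hT.1
  obtain ⟨j, hj⟩ := hD.exists_norm_eq_abs_eigenvalues
  set μ := hD.eigenvalues j
  set v := hD.eigenvectorBasis j
  have hv : ‖v‖ = 1 := hD.eigenvectorBasis.orthonormal.1 j
  have hDv : toEuclideanCLM (𝕜 := ℝ) (S - T) v = μ • v :=
    hD.toEuclideanCLM_eigenvectorBasis j
  set s := ⟪v, toEuclideanCLM (𝕜 := ℝ) S v⟫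
  set t := ⟪v, toEuclideanCLM (𝕜 := ℝ) T v⟫
  have hμ : μ = s - t := by
    rw [← inner_sub_right, ← _root_.sub_apply, ← map_sub, hDv,
      real_inner_smul_right, real_inner_self_eq_norm_sq, hv, one_pow, mul_one]
  have hsymm : ∀ x y, ⟪toEuclideanCLM (𝕜 := ℝ) (S - T) x, y⟫ =
      ⟪x, toEuclideanCLM (𝕜 := ℝ) (S - T) y⟫ :=
    isSymmetric_toEuclideanLin_iff.2 hD
  have hSD : ⟪v, toEuclideanCLM (𝕜 := ℝ) (S * (S - T)) v⟫ = μ * s := by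
    rw [_root_.map_mul]
    change ⟪v, toEuclideanCLM (𝕜 := ℝ) S (toEuclideanCLM (𝕜 := ℝ) (S - T) v)⟫ = _
    rw [hDv, map_smul, real_inner_smul_right]
  have hDT : ⟪v, toEuclideanCLM (𝕜 := ℝ) ((S - T) * T) v⟫ = μ * t := by
    rw [_root_.map_mul]
    change ⟪v, toEuclideanCLM (𝕜 := ℝ) (S - T) (toEuclideanCLM (𝕜 := ℝ) T v)⟫ = _
    rw [← hsymm, hDv, real_inner_smul_left]
  have hform : ⟪v, toEuclideanCLM (𝕜 := ℝ) (S * S - T * T) v⟫ = μ * (s + t) := by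
    rw [show S * S - T * T = S * (S - T) + (S - T) * T by noncomm_ring, map_add,
      _root_.add_apply, inner_add_right, hSD, hDT, mul_add]
  have hs : 0 ≤ s := hS.inner_toEuclideanCLM_self_nonneg v
  have ht : 0 ≤ t := hT.inner_toEuclideanCLM_self_nonneg v
  calc ‖S - T‖ ^ 2 = |μ| * |μ| := by rw [hj, sq]
    _ ≤ |μ| * (s + t) := by gcongr; exact abs_le.2 ⟨by linarith, by linarith⟩
    _ = |⟪v, toEuclideanCLM (𝕜 := ℝ) (S * S - T * T) v⟫| := by
        rw [hform, abs_mul, abs_of_nonneg (add_nonneg hs ht)]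
    _ ≤ ‖S * S - T * T‖ := by
        simpa [hv] using abs_inner_toEuclideanCLM_self_le (S * S - T * T) v

lemma PosDef.iInf_eigenvalues_pos [Nonempty n] {M : Matrix n n ℝ} (hM : M.PosDef) :
    0 < ⨅ i, hM.1.eigenvalues i := by
  obtain ⟨j, hj⟩ := Finite.exists_min hM.1.eigenvalues
  exact (hM.eigenvalues_pos j).trans_le (le_ciInf hj)

lemma PosDef.norm_inv_le {M : Matrix n n ℝ} (hM : M.PosDef) :
    ‖M⁻¹‖ ≤ (⨅ i, hM.1.eigenvalues i)⁻¹ := by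
  rw [nonsing_inv_eq_ringInverse,
    ← cfc_ringInverse_id (R := ℝ) (a := M) hM.isUnit hM.1.isSelfAdjoint]
  refine norm_cfc_le (inv_nonneg.2 (Real.iInf_nonneg fun i => (hM.eigenvalues_pos i).le)) ?_
  rw [hM.1.spectrum_real_eq_range_eigenvalues]
  rintro _ ⟨i, rfl⟩
  have : Nonempty n := ⟨i⟩
  rw [norm_inv, Real.norm_of_nonneg (hM.eigenvalues_pos i).le]
  exact inv_anti₀ hM.iInf_eigenvalues_pos (ciInf_le (Finite.bddBelow_range _) i)

lemma PosDef.norm_inv_sqrt_sq_le {M : Matrix n n ℝ} (hM : M.PosDef) :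
    ‖(CFC.sqrt M)⁻¹‖ ^ 2 ≤ (⨅ i, hM.1.eigenvalues i)⁻¹ := by
  rw [hM.posSemidef.inv_sqrt, CFC.norm_sqrt _ hM.inv.posSemidef.nonneg,
    Real.sq_sqrt (norm_nonneg _)]
  exact hM.norm_inv_le

lemma norm_le_one_of_mul_transpose_eq_one [Fintype m] [DecidableEq m] {C : Matrix m n ℝ}
    (hC : C * Cᵀ = 1) : ‖C‖ ≤ 1 := by
  have hnorm : ‖C‖ * ‖C‖ = ‖(1 : Matrix m m ℝ)‖ := by
    rw [← hC, ← conjTranspose_eq_transpose_of_trivial, ← l2_opNorm_conjTranspose C,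
      ← l2_opNorm_conjTranspose_mul_self Cᴴ, conjTranspose_conjTranspose]
  have hone : ‖(1 : Matrix m m ℝ)‖ ≤ 1 := by
    rw [← l2_opNorm_toEuclideanCLM, _root_.map_one]
    exact ContinuousLinearMap.norm_id_le
  nlinarith [norm_nonneg C]

lemma transpose_sqrt (M : Matrix n n ℝ) : (CFC.sqrt M)ᵀ = CFC.sqrt M := by
  rw [← conjTranspose_eq_transpose_of_trivial]
  exact (CFC.sqrt_nonneg M).posSemidef.1

lemma mul_sqrt_mul_inv_sqrt_mul_mul_transpose {M N : Matrix n n ℝ} (hM : M.PosSemidef)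
    (hN : N.PosDef) (A : Matrix m n ℝ) :
    A * CFC.sqrt M * (CFC.sqrt N)⁻¹ * N * (A * CFC.sqrt M * (CFC.sqrt N)⁻¹)ᵀ = A * M * Aᵀ := by
  have hT : IsUnit (CFC.sqrt N).det :=
    (isUnit_iff_isUnit_det _).1 ((CFC.isUnit_sqrt_iff N hN.posSemidef.nonneg).2 hN.isUnit)
  calc A * CFC.sqrt M * (CFC.sqrt N)⁻¹ * N * (A * CFC.sqrt M * (CFC.sqrt N)⁻¹)ᵀ
      = A * CFC.sqrt M * ((CFC.sqrt N)⁻¹ * (CFC.sqrt N * CFC.sqrt N) * (CFC.sqrt N)⁻¹) *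
          (CFC.sqrt M * Aᵀ) := by
        rw [CFC.sqrt_mul_sqrt_self N hN.posSemidef.nonneg]
        simp only [transpose_mul, transpose_nonsing_inv, transpose_sqrt, Matrix.mul_assoc]
    _ = A * M * Aᵀ := by
        rw [Matrix.mul_assoc, nonsing_inv_mul_cancel_left _ _ hT, mul_nonsing_inv _ hT,
          Matrix.one_mul]
        conv_rhs => rw [← CFC.sqrt_mul_sqrt_self M hM.nonneg]
        simp only [Matrix.mul_assoc]

lemma norm_sub_mul_sqrt_mul_inv_sqrt_le [Fintype m] [DecidableEq m] {M N : Matrix n n ℝ}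
    (hM : M.PosDef) (hN : N.PosDef) {A : Matrix m n ℝ} (hA : A * M * Aᵀ = 1) :
    ‖A - A * CFC.sqrt M * (CFC.sqrt N)⁻¹‖ ≤
      ‖(CFC.sqrt M)⁻¹‖ * ‖CFC.sqrt M - CFC.sqrt N‖ * ‖(CFC.sqrt N)⁻¹‖ := by
  set S := CFC.sqrt M
  set T := CFC.sqrt N
  have hS : IsUnit S.det :=
    (isUnit_iff_isUnit_det _).1 ((CFC.isUnit_sqrt_iff M hM.posSemidef.nonneg).2 hM.isUnit)
  have hT : IsUnit T.det :=
    (isUnit_iff_isUnit_det _).1 ((CFC.isUnit_sqrt_iff N hN.posSemidef.nonneg).2 hN.isUnit)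
  have hAS : ‖A * S‖ ≤ 1 := by
    refine norm_le_one_of_mul_transpose_eq_one ?_
    rw [transpose_mul, transpose_sqrt, Matrix.mul_assoc, ← Matrix.mul_assoc S,
      CFC.sqrt_mul_sqrt_self M hM.posSemidef.nonneg, ← Matrix.mul_assoc, hA]
  have hsplit : A - A * S * T⁻¹ = A * S * (S⁻¹ * (T - S) * T⁻¹) := by
    simp only [Matrix.mul_sub, Matrix.sub_mul, Matrix.mul_assoc, mul_nonsing_inv _ hS,
      mul_nonsing_inv _ hT, mul_nonsing_inv_cancel_left _ _ hS, Matrix.mul_one]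
  calc ‖A - A * S * T⁻¹‖ ≤ ‖A * S‖ * (‖S⁻¹‖ * ‖T - S‖ * ‖T⁻¹‖) := by
        rw [hsplit]
        refine (l2_opNorm_mul _ _).trans (mul_le_mul_of_nonneg_left ?_ (norm_nonneg _))
        exact (l2_opNorm_mul _ _).trans
          (mul_le_mul_of_nonneg_right (l2_opNorm_mul _ _) (norm_nonneg _))
    _ ≤ ‖S⁻¹‖ * ‖S - T‖ * ‖T⁻¹‖ := by
        rw [norm_sub_rev T]
        exact mul_le_of_le_one_left (by positivity) hAS

theorem PosDef.exists_mul_mul_transpose_eq_one_norm_sub_sq_le [Fintype m] [DecidableEq m]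
    {M N : Matrix n n ℝ} (hM : M.PosDef) (hN : N.PosDef) {A : Matrix m n ℝ}
    (hA : A * M * Aᵀ = 1) :
    ∃ B : Matrix m n ℝ, B * N * Bᵀ = 1 ∧
      ‖A - B‖ ^ 2 ≤ ‖M - N‖ / ((⨅ i, hM.1.eigenvalues i) * (⨅ i, hN.1.eigenvalues i)) := by
  refine ⟨A * CFC.sqrt M * (CFC.sqrt N)⁻¹,
    (mul_sqrt_mul_inv_sqrt_mul_mul_transpose hM.posSemidef hN A).trans hA, ?_⟩
  have hsqrt : ‖CFC.sqrt M - CFC.sqrt N‖ ^ 2 ≤ ‖M - N‖ := by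
    simpa only [CFC.sqrt_mul_sqrt_self M hM.posSemidef.nonneg,
      CFC.sqrt_mul_sqrt_self N hN.posSemidef.nonneg] using
      norm_sub_sq_le_norm_mul_self_sub_mul_self (CFC.sqrt_nonneg M).posSemidef
        (CFC.sqrt_nonneg N).posSemidef
  have hM' : 0 ≤ (⨅ i, hM.1.eigenvalues i)⁻¹ :=
    inv_nonneg.2 (Real.iInf_nonneg fun i => (hM.eigenvalues_pos i).le)
  calc ‖A - A * CFC.sqrt M * (CFC.sqrt N)⁻¹‖ ^ 2
      ≤ ‖(CFC.sqrt M)⁻¹‖ ^ 2 * ‖CFC.sqrt M - CFC.sqrt N‖ ^ 2 * ‖(CFC.sqrt N)⁻¹‖ ^ 2 := by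
        rw [← mul_pow, ← mul_pow]
        gcongr
        exact norm_sub_mul_sqrt_mul_inv_sqrt_le hM hN hA
    _ ≤ (⨅ i, hM.1.eigenvalues i)⁻¹ * ‖M - N‖ * (⨅ i, hN.1.eigenvalues i)⁻¹ :=
        mul_le_mul (mul_le_mul hM.norm_inv_sqrt_sq_le hsqrt (by positivity) hM')
          hN.norm_inv_sqrt_sq_le (by positivity) (mul_nonneg hM' (norm_nonneg _))
    _ = ‖M - N‖ / ((⨅ i, hM.1.eigenvalues i) * (⨅ i, hN.1.eigenvalues i)) := by
        rw [div_eq_mul_inv, mul_inv]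
        ring

end Matrix

lemma Prod.dist_sq_le_max {α β : Type*} [PseudoMetricSpace α] [PseudoMetricSpace β]
    {x y : α × β} {a b : ℝ} (h₁ : dist x.1 y.1 ^ 2 ≤ a) (h₂ : dist x.2 y.2 ^ 2 ≤ b) :
    dist x y ^ 2 ≤ max a b := by
  rw [Prod.dist_eq]
  rcases max_cases (dist x.1 y.1) (dist x.2 y.2) with ⟨h, -⟩ | ⟨h, -⟩ <;> rw [h]
  exacts [h₁.trans (le_max_left _ _), h₂.trans (le_max_right _ _)]

lemma Metric.hausdorffEDist_sq_le_ofReal {α : Type*} [PseudoMetricSpace α] {s t : Set α}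
    {r : ℝ} (hs : ∀ x ∈ s, ∃ y ∈ t, dist x y ^ 2 ≤ r)
    (ht : ∀ y ∈ t, ∃ x ∈ s, dist y x ^ 2 ≤ r) :
    hausdorffEDist s t ^ 2 ≤ ENNReal.ofReal r := by
  have hedist {x y : α} (h : dist x y ^ 2 ≤ r) : edist x y ≤ ENNReal.ofReal √r := by
    rw [edist_dist]
    exact ENNReal.ofReal_le_ofReal (Real.le_sqrt_of_sq_le h)
  calc hausdorffEDist s t ^ 2 ≤ ENNReal.ofReal √r ^ 2 := by
        gcongr
        refine hausdorffEDist_le_of_mem_edist (fun x hx => ?_) (fun y hy => ?_)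
        · obtain ⟨y, hy, hxy⟩ := hs x hx
          exact ⟨y, hy, hedist hxy⟩
        · obtain ⟨x, hx, hyx⟩ := ht y hy
          exact ⟨x, hx, hedist hyx⟩
    _ = ENNReal.ofReal r := by
        rw [← ENNReal.ofReal_pow (Real.sqrt_nonneg r), Real.sq_sqrt', ENNReal.ofReal_max,
          ENNReal.ofReal_zero, max_eq_left zero_le]

theorem hausdorff_dist_sq_le_general
    (d₁ d₂ k : ℕ)
    (SigX₁ : Matrix (Fin d₁) (Fin d₁) ℝ)
    (SigX₂ : Matrix (Fin d₂) (Fin d₂) ℝ)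
    (SigY₁ : Matrix (Fin d₁) (Fin d₁) ℝ)
    (SigY₂ : Matrix (Fin d₂) (Fin d₂) ℝ)
    (hpdX₁ : SigX₁.PosDef) (hpdX₂ : SigX₂.PosDef) (hpdY₁ : SigY₁.PosDef) (hpdY₂ : SigY₂.PosDef)
    (SX SY : Set (Matrix (Fin k) (Fin d₁) ℝ × Matrix (Fin k) (Fin d₂) ℝ))
    (hSX : SX = {A | A.1 * SigX₁ * A.1ᵀ = 1 ∧ A.2 * SigX₂ * A.2ᵀ = 1})
    (hSY : SY = {A | A.1 * SigY₁ * A.1ᵀ = 1 ∧ A.2 * SigY₂ * A.2ᵀ = 1}) :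
    EMetric.hausdorffEdist SX SY ^ 2 ≤ ENNReal.ofReal (max
      (‖SigX₁ - SigY₁‖ / ((⨅ i, hpdX₁.1.eigenvalues i) * (⨅ i, hpdY₁.1.eigenvalues i)))
      (‖SigX₂ - SigY₂‖ / ((⨅ i, hpdX₂.1.eigenvalues i) * (⨅ i, hpdY₂.1.eigenvalues i)))) := by
  subst hSX hSY
  refine Metric.hausdorffEDist_sq_le_ofReal ?_ ?_
  · rintro A ⟨hA₁, hA₂⟩
    obtain ⟨B₁, hB₁, h₁⟩ := hpdX₁.exists_mul_mul_transpose_eq_one_norm_sub_sq_le hpdY₁ hA₁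
    obtain ⟨B₂, hB₂, h₂⟩ := hpdX₂.exists_mul_mul_transpose_eq_one_norm_sub_sq_le hpdY₂ hA₂
    exact ⟨(B₁, B₂), ⟨hB₁, hB₂⟩, Prod.dist_sq_le_max (by rwa [dist_eq_norm])
      (by rwa [dist_eq_norm])⟩
  · rintro B ⟨hB₁, hB₂⟩
    obtain ⟨A₁, hA₁, h₁⟩ := hpdY₁.exists_mul_mul_transpose_eq_one_norm_sub_sq_le hpdX₁ hB₁
    obtain ⟨A₂, hA₂, h₂⟩ := hpdY₂.exists_mul_mul_transpose_eq_one_norm_sub_sq_le hpdX₂ hB₂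
    rw [norm_sub_rev SigY₁, mul_comm] at h₁
    rw [norm_sub_rev SigY₂, mul_comm] at h₂
    exact ⟨(A₁, A₂), ⟨hA₁, hA₂⟩, Prod.dist_sq_le_max (by rwa [dist_eq_norm])
      (by rwa [dist_eq_norm])⟩

/-- Let `X` and `Y` be random vectors in `ℝ^{d₁} × ℝ^{d₂}` with finite second
moments and positive definite component covariances. For the feasible sets
`S_X = {(A₁,A₂) : Aᵢ Σ_{Xᵢ} Aᵢᵀ = I_k}` (and similarly `S_Y`), nonempty, the Hausdorff
distance with respect to `‖·‖_V = max{‖·‖₂→₂, ‖·‖₂→₂}` (the product norm of the scoped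
spectral norms) satisfies
`dist(S_X, S_Y)² ≤ max_i ‖Σ_{Xᵢ} - Σ_{Yᵢ}‖₂→₂ / (λ_min(Σ_{Xᵢ}) λ_min(Σ_{Yᵢ}))`. -/
theorem hausdorff_dist_sq_le {Ω₁ Ω₂ : Type*} [MeasurableSpace Ω₁] [MeasurableSpace Ω₂]
    (P : Measure Ω₁) (Q : Measure Ω₂) [IsProbabilityMeasure P] [IsProbabilityMeasure Q]
    (d₁ d₂ k : ℕ) (hd₁ : 0 < d₁) (hd₂ : 0 < d₂)
    (X : Ω₁ → (Fin d₁ → ℝ) × (Fin d₂ → ℝ)) (Y : Ω₂ → (Fin d₁ → ℝ) × (Fin d₂ → ℝ))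
    (hX : Measurable X) (hY : Measurable Y)
    (hX2 : MemLp X 2 P) (hY2 : MemLp Y 2 Q)
    (SigX₁ : Matrix (Fin d₁) (Fin d₁) ℝ)
    (hSigX₁ : SigX₁ = Matrix.of fun a b => ∫ ω,
      ((X ω).1 a - (∫ ω', (X ω').1 ∂P) a) * ((X ω).1 b - (∫ ω', (X ω').1 ∂P) b) ∂P)
    (SigX₂ : Matrix (Fin d₂) (Fin d₂) ℝ)
    (hSigX₂ : SigX₂ = Matrix.of fun a b => ∫ ω,
      ((X ω).2 a - (∫ ω', (X ω').2 ∂P) a) * ((X ω).2 b - (∫ ω', (X ω').2 ∂P) b) ∂P)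
    (SigY₁ : Matrix (Fin d₁) (Fin d₁) ℝ)
    (hSigY₁ : SigY₁ = Matrix.of fun a b => ∫ ω,
      ((Y ω).1 a - (∫ ω', (Y ω').1 ∂Q) a) * ((Y ω).1 b - (∫ ω', (Y ω').1 ∂Q) b) ∂Q)
    (SigY₂ : Matrix (Fin d₂) (Fin d₂) ℝ)
    (hSigY₂ : SigY₂ = Matrix.of fun a b => ∫ ω,
      ((Y ω).2 a - (∫ ω', (Y ω').2 ∂Q) a) * ((Y ω).2 b - (∫ ω', (Y ω').2 ∂Q) b) ∂Q)
    (hpdX₁ : SigX₁.PosDef) (hpdX₂ : SigX₂.PosDef) (hpdY₁ : SigY₁.PosDef) (hpdY₂ : SigY₂.PosDef)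
    (SX SY : Set (Matrix (Fin k) (Fin d₁) ℝ × Matrix (Fin k) (Fin d₂) ℝ))
    (hSX : SX = {A | A.1 * SigX₁ * A.1ᵀ = 1 ∧ A.2 * SigX₂ * A.2ᵀ = 1})
    (hSY : SY = {A | A.1 * SigY₁ * A.1ᵀ = 1 ∧ A.2 * SigY₂ * A.2ᵀ = 1})
    (hSXne : SX.Nonempty) (hSYne : SY.Nonempty) :
    EMetric.hausdorffEdist SX SY ^ 2 ≤ ENNReal.ofReal (max
      (‖SigX₁ - SigY₁‖ / ((⨅ i, hpdX₁.1.eigenvalues i) * (⨅ i, hpdY₁.1.eigenvalues i)))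
      (‖SigX₂ - SigY₂‖ / ((⨅ i, hpdX₂.1.eigenvalues i) * (⨅ i, hpdY₂.1.eigenvalues i)))) :=
  hausdorff_dist_sq_le_general d₁ d₂ k SigX₁ SigX₂ SigY₁ SigY₂ hpdX₁ hpdX₂ hpdY₁ hpdY₂ SX SY hSX hSY
end

section
/- Let $X = [X_1; X_2]$ be a random vector in $\mathbb{R}^{d_1} \times \mathbb{R}^{d_2}$ with finite second moments such that $\|X - \mathbb{E}X\|_{2,\infty} \le \beta$ almost surely, and fix $k \in \mathbb{N}$ and $\alpha > 0$. Then the function $f_X : (T_\alpha, \|\cdot\|_V) \to \mathbb{R}$ is $8\alpha\beta^2$-Lipschitz; i.e., $|f_X(A) - f_X(B)| \le 8\alpha\beta^2 \|A - B\|_V$ for all $A, B \in T_\alpha$. -/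
open Matrix MeasureTheory
open scoped Matrix.Norms.L2Operator

/-! With `Y = X - 𝔼X`, `f_X(A) = 𝔼‖r_A(Y)‖²` for the bilinear residual `r_A(y) = A₁y₁ - A₂y₂`,
which satisfies `‖r_A(y)‖ ≤ 2‖A‖_V‖y‖_{2,∞}` (the sup norm on `ℓ² × ℓ²` is exactly `‖·‖_{2,∞}`).
Pointwise, `|‖r_A y‖² - ‖r_B y‖²| ≤ ‖r_{A-B} y‖ (‖r_A y‖ + ‖r_B y‖) ≤ 2‖A - B‖β · 4αβ`, and
averaging over a probability measure preserves the bound. -/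

theorem abs_norm_sq_sub_norm_sq_le {F : Type*} [SeminormedAddCommGroup F] (u v : F) :
    |‖u‖ ^ 2 - ‖v‖ ^ 2| ≤ ‖u - v‖ * (‖u‖ + ‖v‖) := by
  rw [sq_sub_sq, abs_mul, abs_of_nonneg (by positivity : 0 ≤ ‖u‖ + ‖v‖), mul_comm]
  gcongr
  exact abs_norm_sub_norm_le u v

section Bilinear

variable {𝕜 V W F : Type*} [NontriviallyNormedField 𝕜]
  [SeminormedAddCommGroup V] [NormedSpace 𝕜 V] [SeminormedAddCommGroup W] [NormedSpace 𝕜 W]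
  [SeminormedAddCommGroup F] [NormedSpace 𝕜 F]

theorem ContinuousLinearMap.norm_apply_apply_le_of_le {L : V →L[𝕜] W →L[𝕜] F} {C α β : ℝ}
    (hL : ‖L‖ ≤ C) {a : V} (ha : ‖a‖ ≤ α) {y : W} (hy : ‖y‖ ≤ β) : ‖L a y‖ ≤ C * α * β := by
  have hC : 0 ≤ C := (norm_nonneg L).trans hL
  calc ‖L a y‖ ≤ ‖L‖ * ‖a‖ * ‖y‖ := L.le_opNorm₂ a y
    _ ≤ C * α * β := by gcongr; exact mul_nonneg hC ((norm_nonneg a).trans ha)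

theorem ContinuousLinearMap.abs_norm_sq_apply_sub_norm_sq_apply_le
    {L : V →L[𝕜] W →L[𝕜] F} {C α β : ℝ} (hL : ‖L‖ ≤ C) {a b : V} (ha : ‖a‖ ≤ α) (hb : ‖b‖ ≤ α)
    {y : W} (hy : ‖y‖ ≤ β) :
    |‖L a y‖ ^ 2 - ‖L b y‖ ^ 2| ≤ 2 * C ^ 2 * α * β ^ 2 * ‖a - b‖ :=
  calc |‖L a y‖ ^ 2 - ‖L b y‖ ^ 2| ≤ ‖L (a - b) y‖ * (‖L a y‖ + ‖L b y‖) := by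
        rw [map_sub, _root_.sub_apply]; exact abs_norm_sq_sub_norm_sq_le _ _
    _ ≤ (C * ‖a - b‖ * β) * (C * α * β + C * α * β) :=
        mul_le_mul (norm_apply_apply_le_of_le hL le_rfl hy)
          (add_le_add (norm_apply_apply_le_of_le hL ha hy) (norm_apply_apply_le_of_le hL hb hy))
          (by positivity) ((norm_nonneg _).trans (norm_apply_apply_le_of_le hL le_rfl hy))
    _ = 2 * C ^ 2 * α * β ^ 2 * ‖a - b‖ := by ring

end Bilinear

namespace Matrix

open WithLp (toLp)

variable {𝕜 m n₁ n₂ : Type*} [RCLike 𝕜] [Fintype m] [Fintype n₁] [Fintype n₂]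
  [DecidableEq n₁] [DecidableEq n₂]

theorem norm_toEuclideanLin_apply_le {n : Type*} [Fintype n] [DecidableEq n] (A : Matrix m n 𝕜)
    (x : EuclideanSpace 𝕜 n) : ‖toEuclideanLin A x‖ ≤ ‖A‖ * ‖x‖ :=
  (toEuclideanLin.trans LinearMap.toContinuousLinearMap A).le_opNorm x

noncomputable def residual :
    (Matrix m n₁ 𝕜 × Matrix m n₂ 𝕜) →L[𝕜]
      (EuclideanSpace 𝕜 n₁ × EuclideanSpace 𝕜 n₂) →L[𝕜] EuclideanSpace 𝕜 m :=
  LinearMap.mkContinuous₂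
    (LinearMap.mk₂ 𝕜 (fun A y => toEuclideanLin A.1 y.1 - toEuclideanLin A.2 y.2)
      (by intros; simp only [Prod.fst_add, Prod.snd_add, map_add, LinearMap.add_apply]; abel)
      (by
        intros
        simp only [Prod.smul_fst, Prod.smul_snd, map_smul, LinearMap.smul_apply, smul_sub])
      (by intros; simp only [Prod.fst_add, Prod.snd_add, map_add]; abel)
      (by intros; simp only [Prod.smul_fst, Prod.smul_snd, map_smul, smul_sub]))
    2 fun A y => by
      simp only [LinearMap.mk₂_apply]
      calc ‖toEuclideanLin A.1 y.1 - toEuclideanLin A.2 y.2‖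
          ≤ ‖A.1‖ * ‖y.1‖ + ‖A.2‖ * ‖y.2‖ :=
            (norm_sub_le _ _).trans
              (add_le_add (norm_toEuclideanLin_apply_le _ _) (norm_toEuclideanLin_apply_le _ _))
        _ ≤ ‖A‖ * ‖y‖ + ‖A‖ * ‖y‖ := by
            gcongr
            exacts [norm_fst_le A, norm_fst_le y, norm_snd_le A, norm_snd_le y]
        _ = 2 * ‖A‖ * ‖y‖ := by ring

theorem norm_residual_le : ‖(residual : (Matrix m n₁ 𝕜 × Matrix m n₂ 𝕜) →L[𝕜] _)‖ ≤ 2 :=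
  LinearMap.mkContinuous₂_norm_le _ zero_le_two _

theorem residual_toLp (A : Matrix m n₁ 𝕜 × Matrix m n₂ 𝕜) (v₁ : n₁ → 𝕜) (v₂ : n₂ → 𝕜) :
    residual A (toLp 2 v₁, toLp 2 v₂) = toLp 2 (A.1 *ᵥ v₁ - A.2 *ᵥ v₂) :=
  rfl

end Matrix

namespace EuclideanSpace

open WithLp (toLp)

theorem real_norm_toLp_sq_eq {n : Type*} [Fintype n] (v : n → ℝ) :
    ‖toLp 2 v‖ ^ 2 = ∑ i, v i ^ 2 :=
  real_norm_sq_eq _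

theorem real_norm_toLp_eq {n : Type*} [Fintype n] (v : n → ℝ) :
    ‖toLp 2 v‖ = √(∑ i, v i ^ 2) := by
  rw [← real_norm_toLp_sq_eq, Real.sqrt_sq (norm_nonneg _)]

end EuclideanSpace

section Integral

variable {Ω : Type*} [MeasurableSpace Ω] {P : Measure Ω}

theorem abs_integral_sub_integral_le_of_ae_abs_sub_le [IsProbabilityMeasure P] {f g : Ω → ℝ}
    {C : ℝ} (hf : Integrable f P) (hg : Integrable g P) (h : ∀ᵐ ω ∂P, |f ω - g ω| ≤ C) :
    |∫ ω, f ω ∂P - ∫ ω, g ω ∂P| ≤ C := by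
  simp_rw [← Real.norm_eq_abs] at h ⊢
  rw [← integral_sub hf hg]
  simpa using norm_integral_le_of_norm_le_const h

theorem integrable_norm_sq_of_ae_norm_le {F : Type*} [NormedAddCommGroup F] [IsFiniteMeasure P]
    {f : Ω → F} (hf : AEStronglyMeasurable f P) {c : ℝ} (h : ∀ᵐ ω ∂P, ‖f ω‖ ≤ c) :
    Integrable (fun ω => ‖f ω‖ ^ 2) P :=
  Integrable.of_bound (hf.norm.pow 2) (c ^ 2) <| h.mono fun ω hω => by
    simpa using pow_le_pow_left₀ (norm_nonneg _) hω 2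

end Integral

theorem fX_lipschitz_on_Talpha_general {Ω : Type*} [MeasurableSpace Ω] (P : Measure Ω)
    [IsProbabilityMeasure P] (d₁ d₂ k : ℕ)
    (X : Ω → (Fin d₁ → ℝ) × (Fin d₂ → ℝ)) (hX : Measurable X)
    (β α : ℝ) (μ₁ : Fin d₁ → ℝ) (μ₂ : Fin d₂ → ℝ)
    (hbound : ∀ᵐ ω ∂P,
      max (Real.sqrt (∑ a, ((X ω).1 a - μ₁ a) ^ 2))
          (Real.sqrt (∑ a, ((X ω).2 a - μ₂ a) ^ 2)) ≤ β)
    (fX : Matrix (Fin k) (Fin d₁) ℝ × Matrix (Fin k) (Fin d₂) ℝ → ℝ)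
    (hfX : ∀ A : Matrix (Fin k) (Fin d₁) ℝ × Matrix (Fin k) (Fin d₂) ℝ,
      fX A = ∫ ω, ∑ i, ((A.1 *ᵥ ((X ω).1 - μ₁) - A.2 *ᵥ ((X ω).2 - μ₂)) i) ^ 2 ∂P)
    (A B : Matrix (Fin k) (Fin d₁) ℝ × Matrix (Fin k) (Fin d₂) ℝ)
    (hA : ‖A‖ ≤ α) (hB : ‖B‖ ≤ α) :
    |fX A - fX B| ≤ 8 * α * β ^ 2 * ‖A - B‖ := by
  set y : Ω → EuclideanSpace ℝ (Fin d₁) × EuclideanSpace ℝ (Fin d₂) :=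
    fun ω => (WithLp.toLp 2 ((X ω).1 - μ₁), WithLp.toLp 2 ((X ω).2 - μ₂))
  have hfX_eq : ∀ C, fX C = ∫ ω, ‖residual C (y ω)‖ ^ 2 ∂P := fun C => by
    simp only [hfX, y, residual_toLp, EuclideanSpace.real_norm_toLp_sq_eq]
  have hy : ∀ᵐ ω ∂P, ‖y ω‖ ≤ β := hbound.mono fun ω hω => by
    simpa only [y, Prod.norm_def, EuclideanSpace.real_norm_toLp_eq, Pi.sub_apply] using hω
  have hy_meas : Measurable y := by fun_prop
  have hint : ∀ C : Matrix (Fin k) (Fin d₁) ℝ × Matrix (Fin k) (Fin d₂) ℝ, ‖C‖ ≤ α →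
      Integrable (fun ω => ‖residual C (y ω)‖ ^ 2) P := fun C hC =>
    integrable_norm_sq_of_ae_norm_le (by fun_prop)
      (hy.mono fun ω hω => ContinuousLinearMap.norm_apply_apply_le_of_le norm_residual_le hC hω)
  rw [hfX_eq A, hfX_eq B]
  refine abs_integral_sub_integral_le_of_ae_abs_sub_le (hint A hA) (hint B hB) ?_
  filter_upwards [hy] with ω hω
  exact (ContinuousLinearMap.abs_norm_sq_apply_sub_norm_sq_apply_le norm_residual_le hA hB
    hω).trans_eq (by ring)

/-- Let `X = [X₁; X₂]` be a random vector in `ℝ^{d₁} × ℝ^{d₂}` with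
`‖X - 𝔼X‖_{2,∞} ≤ β` almost surely. Then on `T_α = {A : ‖A‖_V ≤ α}` the function
`f_X(A₁,A₂) = 𝔼‖A₁(X₁ - 𝔼X₁) - A₂(X₂ - 𝔼X₂)‖₂²` is `8αβ²`-Lipschitz with respect to
`‖·‖_V = max{‖·‖₂→₂, ‖·‖₂→₂}` (realized as the product norm of the scoped spectral norms). -/
theorem fX_lipschitz_on_Talpha {Ω : Type*} [MeasurableSpace Ω] (P : Measure Ω)
    [IsProbabilityMeasure P] (d₁ d₂ k : ℕ)
    (X : Ω → (Fin d₁ → ℝ) × (Fin d₂ → ℝ)) (hX : Measurable X) (hXint : Integrable X P)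
    (β α : ℝ) (hβ : 0 ≤ β) (hα : 0 < α)
    (μ₁ : Fin d₁ → ℝ) (hμ₁ : μ₁ = ∫ ω, (X ω).1 ∂P)
    (μ₂ : Fin d₂ → ℝ) (hμ₂ : μ₂ = ∫ ω, (X ω).2 ∂P)
    (hbound : ∀ᵐ ω ∂P,
      max (Real.sqrt (∑ a, ((X ω).1 a - μ₁ a) ^ 2))
          (Real.sqrt (∑ a, ((X ω).2 a - μ₂ a) ^ 2)) ≤ β)
    (fX : Matrix (Fin k) (Fin d₁) ℝ × Matrix (Fin k) (Fin d₂) ℝ → ℝ)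
    (hfX : ∀ A : Matrix (Fin k) (Fin d₁) ℝ × Matrix (Fin k) (Fin d₂) ℝ,
      fX A = ∫ ω, ∑ i, ((A.1 *ᵥ ((X ω).1 - μ₁) - A.2 *ᵥ ((X ω).2 - μ₂)) i) ^ 2 ∂P)
    (A B : Matrix (Fin k) (Fin d₁) ℝ × Matrix (Fin k) (Fin d₂) ℝ)
    (hA : ‖A‖ ≤ α) (hB : ‖B‖ ≤ α) :
    |fX A - fX B| ≤ 8 * α * β ^ 2 * ‖A - B‖ :=
  fX_lipschitz_on_Talpha_general P d₁ d₂ k X hX β α μ₁ μ₂ hbound fX hfX A B hA hB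
end

section
/- Let $A_1 \in \mathbb{R}^{k \times d_1}$, $A_2 \in \mathbb{R}^{k \times d_2}$, $S_1 \in \mathbb{R}^{d_1 \times D}$, and $S_2 \in \mathbb{R}^{d_2 \times D}$ satisfy $A_1 S_1 = A_2 S_2$ and $\operatorname{im} A_i^\top \subseteq \operatorname{im} S_i$ for both $i \in \{1,2\}$. Then $\ker A_i S_i = \ker S_1 + \ker S_2$ (for either, equivalently both, $i \in \{1,2\}$) if and only if $\ker [A_1, -A_2] = \operatorname{im} [S_1; S_2] + (\ker S_1^\top \oplus \ker S_2^\top)$. -/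
/-!
Both equalities hold in one direction for free: `ker S₁ + ker S₂ ⊆ ker A₁S₁` because
`A₁S₁ = A₂S₂`, and `im [S₁; S₂] + (ker S₁ᵀ ⊕ ker S₂ᵀ) ⊆ ker [A₁, -A₂]` because `im Aᵢᵀ ⊆ im Sᵢ`
forces `ker Sᵢᵀ ⊆ ker Aᵢ`. Over an ordered field every `u` splits as `S₁ x + u₀` with
`S₁ᵀ u₀ = 0` (as `im S₁ᵀS₁ = im S₁ᵀ`), so the other inclusion on the right says: whenever
`A₁ u = A₂ v`, the splittings of `u` and `v` can be chosen with a common `x`. For arbitrary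
splittings `u = S₁ x + u₀`, `v = S₂ y + v₀` one has `x - y ∈ ker A₁S₁`, and a decomposition
`x - y = p + q` with `p ∈ ker S₁`, `q ∈ ker S₂` gives the common choice `x - p = y + q`.
Conversely, the right-hand side applied to `(S₁ x, 0)` for `x ∈ ker A₁S₁` yields `z` with
`S₁ᵀS₁ (x - z) = 0` and `S₂ᵀS₂ z = 0`, so `x = (x - z) + z ∈ ker S₁ + ker S₂`.
-/

open Matrix

namespace Matrix

variable {R : Type*} {k m m₁ m₂ n : Type*} [Fintype n]

section CommRing

variable [CommRing R]

theorem ker_mulVecLin_transpose_le_of_range_transpose_le [Fintype k] [Fintype m]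
    {A : Matrix k m R} {S : Matrix m n R}
    (h : LinearMap.range Aᵀ.mulVecLin ≤ LinearMap.range S.mulVecLin) :
    LinearMap.ker Sᵀ.mulVecLin ≤ LinearMap.ker A.mulVecLin := by
  classical
  intro u hu
  rw [LinearMap.mem_ker, mulVecLin_apply] at hu ⊢
  funext i
  obtain ⟨x, hx⟩ := h ⟨Pi.single i 1, rfl⟩
  rw [mulVecLin_apply, mulVecLin_apply, mulVec_transpose, single_one_vecMul] at hx
  calc (A *ᵥ u) i = S *ᵥ x ⬝ᵥ u := by rw [hx]; rfl
    _ = x ⬝ᵥ Sᵀ *ᵥ u := by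
      rw [dotProduct_comm, dotProduct_mulVec, mulVec_transpose, dotProduct_comm]
    _ = 0 := by rw [hu, dotProduct_zero]

theorem mem_ker_fromCols_neg_iff [Fintype m₁] [Fintype m₂] (A₁ : Matrix k m₁ R)
    (A₂ : Matrix k m₂ R) (w : m₁ ⊕ m₂ → R) :
    w ∈ LinearMap.ker (fromCols A₁ (-A₂)).mulVecLin ↔
      A₁ *ᵥ (w ∘ Sum.inl) = A₂ *ᵥ (w ∘ Sum.inr) := by
  conv_lhs => rw [← Sum.elim_comp_inl_inr w]
  rw [LinearMap.mem_ker, mulVecLin_apply, fromCols_mulVec_sumElim, neg_mulVec, ← sub_eq_add_neg,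
    sub_eq_zero]

theorem mem_range_fromRows_sup_map_prod_iff (S₁ : Matrix m₁ n R) (S₂ : Matrix m₂ n R)
    (P₁ : Submodule R (m₁ → R)) (P₂ : Submodule R (m₂ → R)) (w : m₁ ⊕ m₂ → R) :
    w ∈ LinearMap.range (fromRows S₁ S₂).mulVecLin ⊔
        Submodule.map ((LinearEquiv.sumArrowLequivProdArrow m₁ m₂ R R).symm :
          ((m₁ → R) × (m₂ → R)) →ₗ[R] (m₁ ⊕ m₂ → R)) (P₁.prod P₂) ↔
      ∃ x, w ∘ Sum.inl - S₁ *ᵥ x ∈ P₁ ∧ w ∘ Sum.inr - S₂ *ᵥ x ∈ P₂ := by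
  simp only [Submodule.mem_sup, LinearMap.mem_range, Submodule.mem_map, Submodule.mem_prod]
  constructor
  · rintro ⟨_, ⟨x, rfl⟩, _, ⟨⟨u, v⟩, ⟨hu, hv⟩, rfl⟩, rfl⟩
    refine ⟨x, ?_, ?_⟩
    · convert hu using 1
      ext i
      simp
    · convert hv using 1
      ext i
      simp
  · rintro ⟨x, hu, hv⟩
    refine ⟨_, ⟨x, rfl⟩, _, ⟨(_, _), ⟨hu, hv⟩, rfl⟩, ?_⟩
    ext (i | i) <;> simp

theorem range_fromRows_sup_map_prod_le_ker_fromCols_neg [Fintype m₁] [Fintype m₂]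
    {A₁ : Matrix k m₁ R} {A₂ : Matrix k m₂ R} {S₁ : Matrix m₁ n R} {S₂ : Matrix m₂ n R}
    (hAS : A₁ * S₁ = A₂ * S₂)
    (h₁ : LinearMap.ker S₁ᵀ.mulVecLin ≤ LinearMap.ker A₁.mulVecLin)
    (h₂ : LinearMap.ker S₂ᵀ.mulVecLin ≤ LinearMap.ker A₂.mulVecLin) :
    LinearMap.range (fromRows S₁ S₂).mulVecLin ⊔
        Submodule.map ((LinearEquiv.sumArrowLequivProdArrow m₁ m₂ R R).symm :
          ((m₁ → R) × (m₂ → R)) →ₗ[R] (m₁ ⊕ m₂ → R))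
          ((LinearMap.ker S₁ᵀ.mulVecLin).prod (LinearMap.ker S₂ᵀ.mulVecLin)) ≤
      LinearMap.ker (fromCols A₁ (-A₂)).mulVecLin := by
  intro w hw
  obtain ⟨x, hx₁, hx₂⟩ := (mem_range_fromRows_sup_map_prod_iff _ _ _ _ w).1 hw
  rw [mem_ker_fromCols_neg_iff]
  calc A₁ *ᵥ (w ∘ Sum.inl) = A₁ *ᵥ (S₁ *ᵥ x) := LinearMap.sub_mem_ker_iff.1 (h₁ hx₁)
    _ = A₂ *ᵥ (S₂ *ᵥ x) := by rw [mulVec_mulVec, hAS, ← mulVec_mulVec]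
    _ = A₂ *ᵥ (w ∘ Sum.inr) := (LinearMap.sub_mem_ker_iff.1 (h₂ hx₂)).symm

end CommRing

section LinearOrderedField

variable [Field R] [LinearOrder R] [IsStrictOrderedRing R] [Fintype m]

theorem mulVec_mem_ker_transpose_iff (S : Matrix m n R) (x : n → R) :
    S *ᵥ x ∈ LinearMap.ker Sᵀ.mulVecLin ↔ x ∈ LinearMap.ker S.mulVecLin := by
  rw [← ker_mulVecLin_transpose_mul_self S]
  simp only [LinearMap.mem_ker, mulVecLin_apply, mulVec_mulVec]

theorem range_mulVecLin_transpose_mul_self (S : Matrix m n R) :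
    LinearMap.range (Sᵀ * S).mulVecLin = LinearMap.range Sᵀ.mulVecLin := by
  refine Submodule.eq_of_le_of_finrank_eq ?_ ?_
  · rw [mulVecLin_mul]
    exact LinearMap.range_comp_le_range _ _
  · rw [← rank, ← rank, rank_transpose_mul_self, rank_transpose]

theorem exists_sub_mulVec_mem_ker_transpose (S : Matrix m n R) (u : m → R) :
    ∃ x, u - S *ᵥ x ∈ LinearMap.ker Sᵀ.mulVecLin := by
  obtain ⟨x, hx⟩ : Sᵀ *ᵥ u ∈ LinearMap.range (Sᵀ * S).mulVecLin := by
    rw [range_mulVecLin_transpose_mul_self]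
    exact ⟨u, rfl⟩
  refine ⟨x, ?_⟩
  rw [LinearMap.mem_ker, mulVecLin_apply, mulVec_sub, ← hx, mulVecLin_apply, mulVec_mulVec,
    sub_self]

theorem exists_sub_mulVec_mem_ker_transpose_of_ker_mul_le [Fintype m₁] [Fintype m₂]
    {A₁ : Matrix k m₁ R} {A₂ : Matrix k m₂ R} {S₁ : Matrix m₁ n R} {S₂ : Matrix m₂ n R}
    (hAS : A₁ * S₁ = A₂ * S₂)
    (h₁ : LinearMap.ker S₁ᵀ.mulVecLin ≤ LinearMap.ker A₁.mulVecLin)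
    (h₂ : LinearMap.ker S₂ᵀ.mulVecLin ≤ LinearMap.ker A₂.mulVecLin)
    (hker : LinearMap.ker (A₁ * S₁).mulVecLin ≤
      LinearMap.ker S₁.mulVecLin ⊔ LinearMap.ker S₂.mulVecLin)
    {u : m₁ → R} {v : m₂ → R} (huv : A₁ *ᵥ u = A₂ *ᵥ v) :
    ∃ z, u - S₁ *ᵥ z ∈ LinearMap.ker S₁ᵀ.mulVecLin ∧
      v - S₂ *ᵥ z ∈ LinearMap.ker S₂ᵀ.mulVecLin := by
  obtain ⟨x, hx⟩ := exists_sub_mulVec_mem_ker_transpose S₁ u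
  obtain ⟨y, hy⟩ := exists_sub_mulVec_mem_ker_transpose S₂ v
  have hAx : A₁ *ᵥ u = A₁ *ᵥ (S₁ *ᵥ x) := LinearMap.sub_mem_ker_iff.1 (h₁ hx)
  have hAy : A₂ *ᵥ v = A₂ *ᵥ (S₂ *ᵥ y) := LinearMap.sub_mem_ker_iff.1 (h₂ hy)
  have hxy : x - y ∈ LinearMap.ker (A₁ * S₁).mulVecLin := by
    rw [LinearMap.sub_mem_ker_iff, mulVecLin_apply, mulVecLin_apply, ← mulVec_mulVec, ← hAx,
      huv, hAy, hAS, mulVec_mulVec]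
  obtain ⟨p, hp, q, hq, hpq⟩ := Submodule.mem_sup.1 (hker hxy)
  have hp : S₁ *ᵥ p = 0 := hp
  have hq : S₂ *ᵥ q = 0 := hq
  have hz : x - p = y + q := by linear_combination -hpq
  refine ⟨x - p, ?_, ?_⟩
  · rwa [mulVec_sub, hp, sub_zero]
  · rwa [hz, mulVec_add, hq, add_zero]

end LinearOrderedField

end Matrix

/-- Suppose `A₁S₁ = A₂S₂` and `im Aᵢᵀ ⊆ im Sᵢ` for both `i`. Then
`ker AᵢSᵢ = ker S₁ + ker S₂` if and only if
`ker [A₁, -A₂] = im [S₁; S₂] + (ker S₁ᵀ ⊕ ker S₂ᵀ)`.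
The subspace `ker S₁ᵀ ⊕ ker S₂ᵀ` of `ℝ^{d₁+d₂}` is realized by transporting the product
of the kernels along the linear equivalence `(Fin d₁ ⊕ Fin d₂ → ℝ) ≃ₗ (Fin d₁ → ℝ) × (Fin d₂ → ℝ)`. -/
theorem ker_eq_sum_iff_ker_concat (k d₁ d₂ D : ℕ)
    (A₁ : Matrix (Fin k) (Fin d₁) ℝ) (A₂ : Matrix (Fin k) (Fin d₂) ℝ)
    (S₁ : Matrix (Fin d₁) (Fin D) ℝ) (S₂ : Matrix (Fin d₂) (Fin D) ℝ)
    (hAS : A₁ * S₁ = A₂ * S₂)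
    (h₁ : LinearMap.range (A₁ᵀ.mulVecLin) ≤ LinearMap.range (S₁.mulVecLin))
    (h₂ : LinearMap.range (A₂ᵀ.mulVecLin) ≤ LinearMap.range (S₂.mulVecLin)) :
    (LinearMap.ker (A₁ * S₁).mulVecLin
        = LinearMap.ker S₁.mulVecLin ⊔ LinearMap.ker S₂.mulVecLin)
      ↔ LinearMap.ker (fromCols A₁ (-A₂)).mulVecLin
          = LinearMap.range (fromRows S₁ S₂).mulVecLin ⊔
              Submodule.map
                ((LinearEquiv.sumArrowLequivProdArrow (Fin d₁) (Fin d₂) ℝ ℝ).symm :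
                  ((Fin d₁ → ℝ) × (Fin d₂ → ℝ)) →ₗ[ℝ] (Fin d₁ ⊕ Fin d₂ → ℝ))
                ((LinearMap.ker S₁ᵀ.mulVecLin).prod (LinearMap.ker S₂ᵀ.mulVecLin)) := by
  have h₁' := ker_mulVecLin_transpose_le_of_range_transpose_le h₁
  have h₂' := ker_mulVecLin_transpose_le_of_range_transpose_le h₂
  have hK : LinearMap.ker S₁.mulVecLin ⊔ LinearMap.ker S₂.mulVecLin ≤
      LinearMap.ker (A₁ * S₁).mulVecLin := by
    refine sup_le ?_ ?_
    · rw [mulVecLin_mul]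
      exact LinearMap.ker_le_ker_comp _ _
    · rw [hAS, mulVecLin_mul]
      exact LinearMap.ker_le_ker_comp _ _
  rw [← LE.le.ge_iff_eq' hK,
    ← LE.le.ge_iff_eq' (range_fromRows_sup_map_prod_le_ker_fromCols_neg hAS h₁' h₂')]
  constructor
  · intro hker w hw
    rw [mem_ker_fromCols_neg_iff] at hw
    exact (mem_range_fromRows_sup_map_prod_iff _ _ _ _ w).2
      (exists_sub_mulVec_mem_ker_transpose_of_ker_mul_le hAS h₁' h₂' hker hw)
  · intro hN x hx
    have hw : Sum.elim (S₁ *ᵥ x) 0 ∈ LinearMap.ker (fromCols A₁ (-A₂)).mulVecLin := by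
      rw [mem_ker_fromCols_neg_iff, Sum.elim_comp_inl, Sum.elim_comp_inr, mulVec_mulVec,
        mulVec_zero]
      exact hx
    obtain ⟨z, hz₁, hz₂⟩ := (mem_range_fromRows_sup_map_prod_iff _ _ _ _ _).1 (hN hw)
    rw [Sum.elim_comp_inl, ← mulVec_sub, mulVec_mem_ker_transpose_iff] at hz₁
    rw [Sum.elim_comp_inr, zero_sub, neg_mem_iff, mulVec_mem_ker_transpose_iff] at hz₂
    exact Submodule.mem_sup.2 ⟨x - z, hz₁, z, hz₂, sub_add_cancel x z⟩
end

section
/- Let $S_1 \in \mathbb{R}^{d_1 \times D}$ and $S_2 \in \mathbb{R}^{d_2 \times D}$ have full row rank, let $A_1 \in \mathbb{R}^{k \times d_1}$ and $A_2 \in \mathbb{R}^{k \times d_2}$ satisfy $A_1 S_1 = A_2 S_2 =: T$, and suppose $\ker T = \ker S_1 + \ker S_2$. Then $\ker A_1 = S_1(\ker S_2)$, i.e., the null space of $A_1$ equals the image of the null space of $S_2$ under $S_1$. -/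
open Matrix

/-- If `S₁, S₂` have full row rank, `A₁S₁ = A₂S₂ =: T`, and
`ker T = ker S₁ + ker S₂`, then `ker A₁ = S₁(ker S₂)`. -/
theorem ker_eq_image_of_ker_sum (k d₁ d₂ D : ℕ)
    (S₁ : Matrix (Fin d₁) (Fin D) ℝ) (S₂ : Matrix (Fin d₂) (Fin D) ℝ)
    (hS₁ : S₁.rank = d₁) (hS₂ : S₂.rank = d₂)
    (A₁ : Matrix (Fin k) (Fin d₁) ℝ) (A₂ : Matrix (Fin k) (Fin d₂) ℝ)
    (hAS : A₁ * S₁ = A₂ * S₂)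
    (hker : LinearMap.ker (A₁ * S₁).mulVecLin
        = LinearMap.ker S₁.mulVecLin ⊔ LinearMap.ker S₂.mulVecLin) :
    LinearMap.ker A₁.mulVecLin
      = Submodule.map S₁.mulVecLin (LinearMap.ker S₂.mulVecLin) := by
  have hsurj : LinearMap.range S₁.mulVecLin = ⊤ := by
    apply Submodule.eq_top_of_finrank_eq
    rw [← Matrix.rank, hS₁]
    simp [Module.finrank_fin_fun]
  apply le_antisymm
  · intro y hy
    obtain ⟨x, hx⟩ := LinearMap.range_eq_top.mp hsurj y
    have hxT : x ∈ LinearMap.ker (A₁ * S₁).mulVecLin := by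
      simp only [LinearMap.mem_ker, Matrix.mulVecLin_mul, LinearMap.comp_apply, hx]
      exact hy
    rw [hker, Submodule.mem_sup] at hxT
    obtain ⟨u, hu, v, hv, huv⟩ := hxT
    refine ⟨v, hv, ?_⟩
    have : S₁.mulVecLin x = S₁.mulVecLin u + S₁.mulVecLin v := by
      rw [← map_add, huv]
    rw [hx] at this
    rw [LinearMap.mem_ker.mp hu, zero_add] at this
    exact this.symm
  · rintro y ⟨v, hv, rfl⟩
    have : (A₁ * S₁).mulVecLin v = 0 := by
      rw [hAS]
      simp only [Matrix.mulVecLin_mul, LinearMap.comp_apply, LinearMap.mem_ker.mp hv, map_zero]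
    simpa [Matrix.mulVecLin_mul] using this
end
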